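/- Main calibration bound (Theorem A.1): Suppose for each input x: (A1) the true correctness probability is P(x) = σ(Δ(x)/κ(x)) for some κ(x) > 0; (A3) there exists λ(x) > 0 such that |ISE_f(x,τ) - ISE_f(x,κ(x))| ≥ λ(x)·|1/τ - 1/κ(x)| for all τ in the relevant range; and Δ(x) is bounded. Define the confidence proxy c_τ(x) = σ(Δ(x)/τ) and the calibration surrogate E_f(τ) = E_x[(c_τ(x) - P(x))²]. Then for every τ > 0, E_f(τ) ≤ E_x[ w(x)·(ISE_f(x,τ) - ISE_g(x))² ] + C_g, where w(x) = Δ(x)²/(16 λ(x)²) and C_g = E_x[ w(x)·(ISE_f(x,κ(x)) - ISE_g(x))² ] ≥ 0 (up to a factor 2 on both terms if the two-term squared inequality with constant 2 is used). -/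

import Mathlib

noncomputable def sigmoid (t : ℝ) : ℝ := 1 / (1 + Real.exp (-t))

/-! The confidence proxy σ(Δ/τ) and the true probability σ(Δ/κ) differ by at most
|Δ|·|1/τ - 1/κ|/4, since σ is 1/4-Lipschitz. Assumption (A3) bounds |1/τ - 1/κ| by
|ISE_f(τ) - ISE_f(κ)|/λ, and splitting this difference through ISE_g with
(a - b)² ≤ 2(a - c)² + 2(c - b)² gives the bound pointwise; averaging over x finishes. -/

lemma hasDerivAt_sigmoid (t : ℝ) :
    HasDerivAt sigmoid (Real.exp (-t) / (1 + Real.exp (-t)) ^ 2) t := by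
  have hden : HasDerivAt (fun s : ℝ => 1 + Real.exp (-s)) (-Real.exp (-t)) t := by
    simpa using ((Real.hasDerivAt_exp (-t)).comp t (hasDerivAt_neg t)).const_add 1
  rw [show sigmoid = (fun s : ℝ => 1 + Real.exp (-s))⁻¹ from funext fun s => by simp [sigmoid]]
  simpa only [neg_div, neg_neg] using hden.inv (by positivity)

lemma exp_neg_div_one_add_exp_neg_sq_le (t : ℝ) :
    Real.exp (-t) / (1 + Real.exp (-t)) ^ 2 ≤ 1 / 4 := by
  rw [div_le_div_iff₀ (by positivity) (by norm_num)]
  nlinarith [sq_nonneg (1 - Real.exp (-t))]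

lemma abs_sigmoid_sub_le (a b : ℝ) : |sigmoid a - sigmoid b| ≤ 1 / 4 * |a - b| := by
  refine convex_univ.norm_image_sub_le_of_norm_hasDerivWithin_le
    (fun t _ => (hasDerivAt_sigmoid t).hasDerivWithinAt) (fun t _ => ?_)
    (Set.mem_univ b) (Set.mem_univ a)
  rw [Real.norm_of_nonneg (by positivity)]
  exact exp_neg_div_one_add_exp_neg_sq_le t

lemma sq_sigmoid_div_sub_sigmoid_div_le (d τ κ : ℝ) :
    (sigmoid (d / τ) - sigmoid (d / κ)) ^ 2 ≤ d ^ 2 / 16 * (1 / τ - 1 / κ) ^ 2 := by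
  have h := abs_sigmoid_sub_le (d / τ) (d / κ)
  rw [show d / τ - d / κ = d * (1 / τ - 1 / κ) by ring, abs_mul] at h
  calc (sigmoid (d / τ) - sigmoid (d / κ)) ^ 2
      = |sigmoid (d / τ) - sigmoid (d / κ)| ^ 2 := (sq_abs _).symm
    _ ≤ (1 / 4 * (|d| * |1 / τ - 1 / κ|)) ^ 2 := by gcongr
    _ = d ^ 2 / 16 * (1 / τ - 1 / κ) ^ 2 := by simp only [mul_pow, sq_abs]; ring

lemma sq_le_sq_div_sq_of_mul_abs_le {c u v : ℝ} (hc : 0 < c) (h : c * |u| ≤ |v|) :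
    u ^ 2 ≤ v ^ 2 / c ^ 2 := by
  rw [le_div_iff₀ (by positivity), ← sq_abs u, ← sq_abs v, ← mul_pow, mul_comm]
  gcongr

lemma sub_sq_le_two_mul_sub_sq_add (a b c : ℝ) :
    (a - b) ^ 2 ≤ 2 * (a - c) ^ 2 + 2 * (b - c) ^ 2 := by
  nlinarith [sq_nonneg (a + b - 2 * c)]

lemma sq_sigmoid_sub_le_of_ise_gap {d τ κ lam f fκ g : ℝ} (hlam : 0 < lam)
    (hgap : lam * |1 / τ - 1 / κ| ≤ |f - fκ|) :
    (sigmoid (d / τ) - sigmoid (d / κ)) ^ 2 ≤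
      2 * (d ^ 2 / (16 * lam ^ 2)) * (f - g) ^ 2 + 2 * (d ^ 2 / (16 * lam ^ 2) * (fκ - g) ^ 2) :=
  calc (sigmoid (d / τ) - sigmoid (d / κ)) ^ 2
      ≤ d ^ 2 / 16 * (1 / τ - 1 / κ) ^ 2 := sq_sigmoid_div_sub_sigmoid_div_le d τ κ
    _ ≤ d ^ 2 / 16 * ((f - fκ) ^ 2 / lam ^ 2) := by
        gcongr; exact sq_le_sq_div_sq_of_mul_abs_le hlam hgap
    _ ≤ d ^ 2 / 16 * ((2 * (f - g) ^ 2 + 2 * (fκ - g) ^ 2) / lam ^ 2) := by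
        gcongr; exact sub_sq_le_two_mul_sub_sq_add f fκ g
    _ = 2 * (d ^ 2 / (16 * lam ^ 2)) * (f - g) ^ 2 +
          2 * (d ^ 2 / (16 * lam ^ 2) * (fκ - g) ^ 2) := by
        field_simp

theorem calibration_bound_general {ι : Type*} [Fintype ι]
    (μ : ι → ℝ) (hμ0 : ∀ x, 0 ≤ μ x)
    (Δ κ lam ISEg : ι → ℝ) (ISEf : ι → ℝ → ℝ) (P : ι → ℝ)
    (hlam : ∀ x, 0 < lam x)
    (hA1 : ∀ x, P x = sigmoid (Δ x / κ x))
    (hA3 : ∀ x, ∀ τ : ℝ, 0 < τ →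
      lam x * |1 / τ - 1 / κ x| ≤ |ISEf x τ - ISEf x (κ x)|)
    (w : ι → ℝ) (hw : ∀ x, w x = Δ x ^ 2 / (16 * lam x ^ 2))
    (Cg : ℝ) (hCg : Cg = ∑ x, μ x * (w x * (ISEf x (κ x) - ISEg x) ^ 2)) :
    0 ≤ Cg ∧
      ∀ τ : ℝ, 0 < τ →
        ∑ x, μ x * (sigmoid (Δ x / τ) - P x) ^ 2 ≤
          ∑ x, μ x * (2 * w x * (ISEf x τ - ISEg x) ^ 2) + 2 * Cg := by
  have hw0 : ∀ x, 0 ≤ w x := fun x => by rw [hw x]; positivity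
  refine ⟨hCg ▸ Finset.sum_nonneg fun x _ => by have := hw0 x; have := hμ0 x; positivity,
    fun τ hτ => ?_⟩
  have hpoint : ∀ x, μ x * (sigmoid (Δ x / τ) - P x) ^ 2 ≤
      μ x * (2 * w x * (ISEf x τ - ISEg x) ^ 2) +
        2 * (μ x * (w x * (ISEf x (κ x) - ISEg x) ^ 2)) := fun x => by
    rw [hA1 x, hw x, mul_left_comm 2 (μ x), ← mul_add]
    exact mul_le_mul_of_nonneg_left
      (sq_sigmoid_sub_le_of_ise_gap (hlam x) (hA3 x τ hτ)) (hμ0 x)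
  calc ∑ x, μ x * (sigmoid (Δ x / τ) - P x) ^ 2
      ≤ ∑ x, (μ x * (2 * w x * (ISEf x τ - ISEg x) ^ 2) +
          2 * (μ x * (w x * (ISEf x (κ x) - ISEg x) ^ 2))) :=
        Finset.sum_le_sum fun x _ => hpoint x
    _ = ∑ x, μ x * (2 * w x * (ISEf x τ - ISEg x) ^ 2) + 2 * Cg := by
        rw [Finset.sum_add_distrib, hCg, Finset.mul_sum]

/-- Main calibration bound (Theorem A.1), with the factor-2 two-term splitting. -/
theorem calibration_bound {ι : Type*} [Fintype ι]
    (μ : ι → ℝ) (hμ0 : ∀ x, 0 ≤ μ x) (hμ1 : ∑ x, μ x = 1)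
    (Δ κ lam ISEg : ι → ℝ) (ISEf : ι → ℝ → ℝ) (P : ι → ℝ)
    (hκ : ∀ x, 0 < κ x) (hlam : ∀ x, 0 < lam x)
    (hA1 : ∀ x, P x = sigmoid (Δ x / κ x))
    (hA3 : ∀ x, ∀ τ : ℝ, 0 < τ →
      lam x * |1 / τ - 1 / κ x| ≤ |ISEf x τ - ISEf x (κ x)|)
    (hbdd : ∃ M : ℝ, ∀ x, |Δ x| ≤ M)
    (w : ι → ℝ) (hw : ∀ x, w x = Δ x ^ 2 / (16 * lam x ^ 2))
    (Cg : ℝ) (hCg : Cg = ∑ x, μ x * (w x * (ISEf x (κ x) - ISEg x) ^ 2)) :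
    0 ≤ Cg ∧
      ∀ τ : ℝ, 0 < τ →
        ∑ x, μ x * (sigmoid (Δ x / τ) - P x) ^ 2 ≤
          ∑ x, μ x * (2 * w x * (ISEf x τ - ISEg x) ^ 2) + 2 * Cg :=
  calibration_bound_general μ hμ0 Δ κ lam ISEg ISEf P hlam hA1 hA3 w hw Cg hCg
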